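/- arXiv:2309.13928 — 8 statements merged into one kernel-verified Lean document; each statement's English description precedes it below -/
import Mathlib

section
/- In G = ℚ ⋊_q M, for all c, c', d ∈ ℚ and s, s', t ∈ M, the conjugacy equation (d, t)⁻¹ (c, s) (d, t) = (c', s') holds if and only if s' = s and q(t)·c' = c + d·(q(s) − 1). Consequently, the conjugacy search problem in G for elements with known components reduces to solving a linear equation over ℚ in the unknowns d and q(t). -/
/-- The semidirect product `G = ℚ ⋊_q M` of the additive group of `ℚ` by an abelian
group `M`, where `t : M` acts on `ℚ` by multiplication by `q t`.  Elements are pairs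
`⟨d, t⟩` with `d : ℚ`, `t : M`, multiplied by `⟨d, t⟩ * ⟨e, u⟩ = ⟨d + q t * e, t * u⟩`. -/
@[ext]
structure QSemidirect (M : Type*) [CommGroup M] (q : M →* ℚˣ) where
  fst : ℚ
  snd : M

namespace QSemidirect

variable {M : Type*} [CommGroup M] {q : M →* ℚˣ}

instance : Mul (QSemidirect M q) :=
  ⟨fun x y => ⟨x.fst + (q x.snd : ℚ) * y.fst, x.snd * y.snd⟩⟩

instance : One (QSemidirect M q) := ⟨⟨0, 1⟩⟩

instance : Inv (QSemidirect M q) :=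
  ⟨fun x => ⟨-((q x.snd : ℚ)⁻¹ * x.fst), x.snd⁻¹⟩⟩

@[simp] lemma mul_fst (x y : QSemidirect M q) :
    (x * y).fst = x.fst + (q x.snd : ℚ) * y.fst := rfl

@[simp] lemma mul_snd (x y : QSemidirect M q) : (x * y).snd = x.snd * y.snd := rfl

@[simp] lemma one_fst : (1 : QSemidirect M q).fst = 0 := rfl

@[simp] lemma one_snd : (1 : QSemidirect M q).snd = 1 := rfl

@[simp] lemma inv_fst (x : QSemidirect M q) :
    (x⁻¹).fst = -((q x.snd : ℚ)⁻¹ * x.fst) := rfl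

@[simp] lemma inv_snd (x : QSemidirect M q) : (x⁻¹).snd = x.snd⁻¹ := rfl

instance : Group (QSemidirect M q) where
  mul_assoc x y z := by
    ext
    · simp only [mul_fst, mul_snd, map_mul, Units.val_mul]; ring
    · simp [mul_assoc]
  one_mul x := by ext <;> simp
  mul_one x := by ext <;> simp
  inv_mul_cancel x := by
    ext
    · have h : (q x.snd : ℚ) ≠ 0 := Units.ne_zero _
      simp only [mul_fst, inv_fst, inv_snd, map_inv, one_fst]
      field_simp
      simp
    · simp

end QSemidirect

/-- In `G = ℚ ⋊_q M`, the conjugacy equation `(d,t)⁻¹ (c,s) (d,t) = (c',s')` holds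
iff `s' = s` and `q t * c' = c + d * (q s - 1)`: the CSP reduces to a linear
equation over `ℚ`. -/
theorem conj_eq_iff_linear (M : Type*) [CommGroup M] (q : M →* ℚˣ)
    (c c' d : ℚ) (s s' t : M) :
    (⟨d, t⟩ : QSemidirect M q)⁻¹ * ⟨c, s⟩ * ⟨d, t⟩ = ⟨c', s'⟩ ↔
      s' = s ∧ (q t : ℚ) * c' = c + d * ((q s : ℚ) - 1) := by
  have ht : (q t : ℚ) ≠ 0 := Units.ne_zero _
  constructor
  · intro h
    have h1 := congrArg QSemidirect.fst h
    have h2 := congrArg QSemidirect.snd h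
    simp only [QSemidirect.mul_fst, QSemidirect.mul_snd, QSemidirect.inv_fst,
      QSemidirect.inv_snd, map_mul, map_inv, Units.val_mul,
      Units.val_inv_eq_inv_val] at h1 h2
    refine ⟨?_, ?_⟩
    · rw [← h2, mul_comm t⁻¹ s, mul_assoc, inv_mul_cancel, mul_one]
    · rw [← h1]
      field_simp
      ring
  · rintro ⟨rfl, h⟩
    have hc : c' = (q t : ℚ)⁻¹ * (c + d * ((q s' : ℚ) - 1)) := by
      rw [← h, inv_mul_cancel_left₀ ht]
    ext
    · simp only [QSemidirect.mul_fst, QSemidirect.mul_snd, QSemidirect.inv_fst, QSemidirect.inv_snd,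
        map_mul, map_inv, Units.val_mul, Units.val_inv_eq_inv_val]
      rw [hc]
      field_simp
      ring
    · simp [mul_comm]
end

section
/- In G = ℚ ⋊_q M, let b₁ = (c₁, s₁) and b₂ = (c₂, s₂) be elements of G satisfying the nondegeneracy condition (q(s₁) − 1)·c₂ ≠ (q(s₂) − 1)·c₁, and let b₁', b₂' ∈ G. If x = (d, t) and x' = (d', t') are both solutions of the simultaneous conjugacy equations x⁻¹ b₁ x = b₁' and x⁻¹ b₂ x = b₂', then d = d' and q(t) = q(t'). (This is the source of the polynomial-time break of the Anshel–Anshel–Goldfeld commutator key-exchange protocol on generalized metabelian Baumslag–Solitar groups: the public conjugacy equations determine the secret conjugator's parameters uniquely.) -/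
/-- Nondegenerate simultaneous conjugacy equations in `G = ℚ ⋊_q M` determine the
conjugator's parameters uniquely: this is the source of the polynomial-time break of
the Anshel–Anshel–Goldfeld protocol on generalized metabelian Baumslag–Solitar groups. -/
theorem simultaneous_conj_unique (M : Type*) [CommGroup M] (q : M →* ℚˣ)
    (c₁ c₂ : ℚ) (s₁ s₂ : M)
    (hnd : ((q s₁ : ℚ) - 1) * c₂ ≠ ((q s₂ : ℚ) - 1) * c₁)
    (b₁' b₂' : QSemidirect M q) (d d' : ℚ) (t t' : M)
    (h₁ : (⟨d, t⟩ : QSemidirect M q)⁻¹ * ⟨c₁, s₁⟩ * ⟨d, t⟩ = b₁')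
    (h₂ : (⟨d, t⟩ : QSemidirect M q)⁻¹ * ⟨c₂, s₂⟩ * ⟨d, t⟩ = b₂')
    (h₁' : (⟨d', t'⟩ : QSemidirect M q)⁻¹ * ⟨c₁, s₁⟩ * ⟨d', t'⟩ = b₁')
    (h₂' : (⟨d', t'⟩ : QSemidirect M q)⁻¹ * ⟨c₂, s₂⟩ * ⟨d', t'⟩ = b₂') :
    d = d' ∧ q t = q t' := by
  have e1 := congrArg QSemidirect.fst (h₁.trans h₁'.symm)
  have e2 := congrArg QSemidirect.fst (h₂.trans h₂'.symm)
  simp only [QSemidirect.mul_fst, QSemidirect.mul_snd, QSemidirect.inv_fst,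
    QSemidirect.inv_snd, map_inv, map_mul, Units.val_mul, Units.val_inv_eq_inv_val] at e1 e2
  have ht : (q t : ℚ) ≠ 0 := Units.ne_zero _
  have ht' : (q t' : ℚ) ≠ 0 := Units.ne_zero _
  field_simp at e1 e2
  have hsq : (q t : ℚ) * (q t) * ((q t' : ℚ) * (q t')) ≠ 0 :=
    mul_ne_zero (mul_ne_zero ht ht) (mul_ne_zero ht' ht')
  have E1 : (q t' : ℚ) * (c₁ + ((q s₁ : ℚ) - 1) * d)
      = (q t : ℚ) * (c₁ + ((q s₁ : ℚ) - 1) * d') := by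
    apply mul_left_cancel₀ hsq
    linear_combination ((q t : ℚ) * (q t) * ((q t' : ℚ) * (q t'))) * e1
  have E2 : (q t' : ℚ) * (c₂ + ((q s₂ : ℚ) - 1) * d)
      = (q t : ℚ) * (c₂ + ((q s₂ : ℚ) - 1) * d') := by
    apply mul_left_cancel₀ hsq
    linear_combination ((q t : ℚ) * (q t) * ((q t' : ℚ) * (q t'))) * e2
  have key : ((q t : ℚ) - (q t')) * (((q s₂ : ℚ) - 1) * c₁ - ((q s₁ : ℚ) - 1) * c₂) = 0 := by
    linear_combination ((q s₁ : ℚ) - 1) * E2 - ((q s₂ : ℚ) - 1) * E1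
  have hA : (q t : ℚ) = (q t' : ℚ) := by
    rcases mul_eq_zero.mp key with h | h
    · linarith [sub_eq_zero.mp h]
    · exact absurd (by linarith : ((q s₁ : ℚ) - 1) * c₂ = ((q s₂ : ℚ) - 1) * c₁) hnd
  have hud : ((q s₁ : ℚ) - 1) * (d - d') = 0 := by
    apply mul_left_cancel₀ ht
    linear_combination E1 + (c₁ + ((q s₁ : ℚ) - 1) * d) * hA
  have hvd : ((q s₂ : ℚ) - 1) * (d - d') = 0 := by
    apply mul_left_cancel₀ ht
    linear_combination E2 + (c₂ + ((q s₂ : ℚ) - 1) * d) * hA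
  refine ⟨?_, Units.ext hA⟩
  rcases mul_eq_zero.mp hud with h | h
  · rcases mul_eq_zero.mp hvd with h2 | h2
    · exact absurd (by rw [h, h2]; ring) hnd
    · linarith [sub_eq_zero.mp h2]
  · linarith [sub_eq_zero.mp h]
end

section
/- In G = ℚ ⋊_q M, let g = (c, s) with c ≠ 0, and let a = (0, t) and b = (0, u) with t, u ∈ M (i.e., a and b lie in the canonical complement inr(M)). Write a⁻¹ g a = (c₁, s) and b⁻¹ g b = (c₂, s). Then the shared key of the non-commutative Diffie–Hellman (Ko–Lee) protocol satisfies (ab)⁻¹ g (ab) = (c₁·c₂ / c, s); in particular the shared key is determined by the public data g, gᵃ, gᵇ. -/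
/-- Ko–Lee with both secrets in the canonical complement `inr M`:
the shared key `(ab)⁻¹ g (ab)` equals `(c₁ * c₂ / c, s)`, hence is determined by the
public data `g`, `gᵃ`, `gᵇ`. -/
theorem koLee_key_from_public_inr (M : Type*) [CommGroup M] (q : M →* ℚˣ)
    (c c₁ c₂ : ℚ) (s t u : M) (hc : c ≠ 0)
    (h₁ : (⟨0, t⟩ : QSemidirect M q)⁻¹ * ⟨c, s⟩ * ⟨0, t⟩ = ⟨c₁, s⟩)
    (h₂ : (⟨0, u⟩ : QSemidirect M q)⁻¹ * ⟨c, s⟩ * ⟨0, u⟩ = ⟨c₂, s⟩) :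
    ((⟨0, t⟩ : QSemidirect M q) * ⟨0, u⟩)⁻¹ * ⟨c, s⟩ * ((⟨0, t⟩ : QSemidirect M q) * ⟨0, u⟩)
      = ⟨c₁ * c₂ / c, s⟩ := by
  have e₁ : ((q t : ℚ))⁻¹ * c = c₁ := by
    have := congrArg QSemidirect.fst h₁
    simpa using this
  have e₂ : ((q u : ℚ))⁻¹ * c = c₂ := by
    have := congrArg QSemidirect.fst h₂
    simpa using this
  ext
  · simp only [QSemidirect.mul_fst, QSemidirect.inv_fst, QSemidirect.inv_snd,
      QSemidirect.mul_snd, map_mul, Units.val_mul]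
    rw [← e₁, ← e₂]
    have ht : (q t : ℚ) ≠ 0 := Units.ne_zero _
    have hu : (q u : ℚ) ≠ 0 := Units.ne_zero _
    field_simp
    rw [map_inv, Units.val_inv_eq_inv_val, map_mul, Units.val_mul]
    field_simp
    ring
  · simp only [QSemidirect.mul_snd, QSemidirect.inv_snd, mul_inv_rev]
    simp [mul_comm, mul_left_comm, mul_assoc]
end

section
/- In G = ℚ ⋊_q M, let g = (c, s) with c ≠ 0 and let a = (0, t) with t ∈ M. If a⁻¹ g a = (c₁, s), then c₁ ≠ 0 and q(t) = c / c₁. In particular, when the secret conjugator in the non-commutative Diffie–Hellman protocol is chosen from the canonical complement inr(M), the value q(t) of the action of the secret is recovered from the public pair (g, gᵃ) by a single division in ℚ. -/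
/-- When the Ko–Lee secret conjugator lies in the canonical complement `inr M`,
the value `q t` of its action is recovered from the public pair `(g, gᵃ)` by a single
division in `ℚ`. -/
theorem koLee_recover_inr_secret (M : Type*) [CommGroup M] (q : M →* ℚˣ)
    (c c₁ : ℚ) (s t : M) (hc : c ≠ 0)
    (h : (⟨0, t⟩ : QSemidirect M q)⁻¹ * ⟨c, s⟩ * ⟨0, t⟩ = ⟨c₁, s⟩) :
    c₁ ≠ 0 ∧ (q t : ℚ) = c / c₁ := by
  have hfst := congrArg QSemidirect.fst h
  simp only [QSemidirect.mul_fst, QSemidirect.mul_snd, QSemidirect.inv_fst,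
    QSemidirect.inv_snd, map_inv] at hfst
  have hq : (q t : ℚ) ≠ 0 := Units.ne_zero _
  have hc₁ : c₁ = (q t : ℚ)⁻¹ * c := by
    rw [← hfst]; push_cast; ring
  constructor
  · rw [hc₁]; exact mul_ne_zero (inv_ne_zero hq) hc
  · rw [hc₁]; field_simp
end

section
/- In G = ℚ ⋊_q M, let g = (c, s) with q(s) ≠ 1 and let a = (d, 1) with d ∈ ℚ (i.e., a lies in the normal subgroup inl(ℚ)). If a⁻¹ g a = (c₁, s), then d = (c₁ − c)/(q(s) − 1). In particular, when the secret conjugator in the non-commutative Diffie–Hellman protocol is chosen from the normal abelian subgroup, it is recovered from the public pair (g, gᵃ) by a single division in ℚ. -/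
/-- When the Ko–Lee secret conjugator lies in the normal abelian subgroup `inl ℚ`,
it is recovered from the public pair `(g, gᵃ)` by a single division in `ℚ`. -/
theorem koLee_recover_inl_secret (M : Type*) [CommGroup M] (q : M →* ℚˣ)
    (c c₁ d : ℚ) (s : M) (hs : (q s : ℚ) ≠ 1)
    (h : (⟨d, 1⟩ : QSemidirect M q)⁻¹ * ⟨c, s⟩ * ⟨d, 1⟩ = ⟨c₁, s⟩) :
    d = (c₁ - c) / ((q s : ℚ) - 1) := by
  have h1 := congrArg QSemidirect.fst h
  simp only [QSemidirect.mul_fst, QSemidirect.inv_fst, QSemidirect.inv_snd, map_one,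
    QSemidirect.mul_snd, inv_one, one_mul, Units.val_one] at h1
  have hne : (q s : ℚ) - 1 ≠ 0 := sub_ne_zero.mpr hs
  field_simp
  linarith [h1]
end

section
/- In G = ℚ ⋊_q M, let a = (d, t) with q(t) ≠ 1 and set r = d / (q(t) − 1). Then the centralizer of a in G equals M^r = inl(r)⁻¹ · inr(M) · inl(r); explicitly, C_G(a) = { (r·(q(u) − 1), u) : u ∈ M }. -/
/-- For `a = (d, t)` with `q t ≠ 1` and `r = d / (q t - 1)`, the centralizer of `a`
in `G = ℚ ⋊_q M` equals the conjugated complement `Mʳ = inl r⁻¹ * inr M * inl r`;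
explicitly it is `{(r * (q u - 1), u) : u ∈ M}`. -/
theorem centralizer_eq_conjugated_complement (M : Type*) [CommGroup M] (q : M →* ℚˣ)
    (d : ℚ) (t : M) (ht : (q t : ℚ) ≠ 1) (r : ℚ) (hr : r = d / ((q t : ℚ) - 1)) :
    (Subgroup.centralizer {(⟨d, t⟩ : QSemidirect M q)} : Set (QSemidirect M q))
        = {x | ∃ u : M, x = (⟨r, 1⟩ : QSemidirect M q)⁻¹ * ⟨0, u⟩ * ⟨r, 1⟩}
    ∧ (Subgroup.centralizer {(⟨d, t⟩ : QSemidirect M q)} : Set (QSemidirect M q))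
        = {x | ∃ u : M, x = ⟨r * ((q u : ℚ) - 1), u⟩} := by
  have hconj : ∀ u : M, (⟨r, 1⟩ : QSemidirect M q)⁻¹ * ⟨0, u⟩ * ⟨r, 1⟩
      = (⟨r * ((q u : ℚ) - 1), u⟩ : QSemidirect M q) := by
    intro u
    ext
    · simp only [QSemidirect.mul_fst, QSemidirect.inv_fst, QSemidirect.inv_snd,
        QSemidirect.mul_snd, map_one, map_inv, Units.val_one, inv_one, one_mul]
      ring
    · simp
  have hcent : (Subgroup.centralizer {(⟨d, t⟩ : QSemidirect M q)} :
      Set (QSemidirect M q)) = {x | ∃ u : M, x = ⟨r * ((q u : ℚ) - 1), u⟩} := by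
    ext x
    simp only [SetLike.mem_coe, Subgroup.mem_centralizer_singleton_iff, Set.mem_setOf_eq]
    constructor
    · intro hx
      refine ⟨x.snd, ?_⟩
      have h1 : x.fst + (q x.snd : ℚ) * d = d + (q t : ℚ) * x.fst := by
        have := congrArg QSemidirect.fst hx
        simpa using this
      have h2 : ((q t : ℚ) - 1) ≠ 0 := sub_ne_zero.mpr ht
      ext
      · simp only [hr]
        field_simp
        linarith [h1]
      · rfl
    · rintro ⟨u, rfl⟩
      ext
      · have h2 : ((q t : ℚ) - 1) ≠ 0 := sub_ne_zero.mpr ht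
        simp only [QSemidirect.mul_fst, QSemidirect.mul_snd, hr]
        field_simp
        ring
      · simp [mul_comm]
  refine ⟨?_, hcent⟩
  rw [hcent]
  ext x
  simp only [Set.mem_setOf_eq]
  exact exists_congr fun u => by rw [hconj]
end

section
/- Let M be an abelian group and q : M →* ℚˣ a group homomorphism such that q(u₀) ≠ 1 for some u₀ ∈ M. Let δ : M → ℚ be a 1-cocycle for the action of M on ℚ by multiplication through q, i.e., δ(u·v) = δ(u) + q(u)·δ(v) for all u, v ∈ M. Then δ is a coboundary: there exists r ∈ ℚ such that δ(u) = r·(q(u) − 1) for all u ∈ M. (Equivalently, the first cohomology group H¹(M, ℚ) with this action vanishes.) -/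
/-- If `M` acts on `ℚ` through `q : M →* ℚˣ` and the action is nontrivial, then every
1-cocycle `δ : M → ℚ` is a coboundary: `H¹(M, ℚ) = 0` for this action. -/
theorem cocycle_is_coboundary (M : Type*) [CommGroup M] (q : M →* ℚˣ)
    (u₀ : M) (hu₀ : (q u₀ : ℚ) ≠ 1)
    (δ : M → ℚ) (hδ : ∀ u v : M, δ (u * v) = δ u + (q u : ℚ) * δ v) :
    ∃ r : ℚ, ∀ u : M, δ u = r * ((q u : ℚ) - 1) := by
  refine ⟨δ u₀ / ((q u₀ : ℚ) - 1), fun u => ?_⟩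
  have h1 := hδ u u₀
  have h2 := hδ u₀ u
  rw [mul_comm u₀ u] at h2
  have key : δ u * (1 - (q u₀ : ℚ)) = δ u₀ * (1 - (q u : ℚ)) := by
    have := h1.symm.trans h2
    ring_nf
    ring_nf at this
    linarith
  have hne : (q u₀ : ℚ) - 1 ≠ 0 := sub_ne_zero.mpr hu₀
  field_simp
  linarith [key]
end

section
/- Let n ≥ 1 and let m₁, …, mₙ be positive integers. Let G be the generalized metabelian Baumslag–Solitar group given by the presentation with generators q₁, …, qₙ, b and relations [qᵢ, qⱼ] = 1 (for all i, j) and qᵢ⁻¹ b qᵢ = b^{mᵢ} (for all i). Then G is isomorphic to the semidirect product N ⋊ M, where N is the additive group of the subring ℤ[1/(m₁⋯mₙ)] = ℤ[m₁^{±1}, …, mₙ^{±1}] of ℚ, M = ℤⁿ, and k = (k₁, …, kₙ) ∈ M acts on N by multiplication by ∏ᵢ mᵢ^{kᵢ}. -/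
/-- Relators of the generalized metabelian Baumslag–Solitar group on generators
`q₁, …, qₙ, b`: the generator `Sum.inl i` is `qᵢ` and `Sum.inr ()` is `b`; the
relators are `qᵢ qⱼ qᵢ⁻¹ qⱼ⁻¹` and `qᵢ⁻¹ b qᵢ b^{-mᵢ}`. -/
def gbsRels (n : ℕ) (m : Fin n → ℕ+) : Set (FreeGroup (Fin n ⊕ Unit)) :=
  {x | (∃ i j : Fin n,
          x = FreeGroup.of (Sum.inl i) * FreeGroup.of (Sum.inl j) *
              (FreeGroup.of (Sum.inl i))⁻¹ * (FreeGroup.of (Sum.inl j))⁻¹)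
     ∨ (∃ i : Fin n,
          x = (FreeGroup.of (Sum.inl i))⁻¹ * FreeGroup.of (Sum.inr ()) *
              FreeGroup.of (Sum.inl i) * FreeGroup.of (Sum.inr ()) ^ (-((m i : ℕ) : ℤ)))}

/-- The subring `ℤ[m₁^{±1}, …, mₙ^{±1}] = ℤ[1/(m₁⋯mₙ)]` of `ℚ`: the smallest subring
of `ℚ` containing (`ℤ` and) the inverses of all the `mᵢ`. -/
def gbsRing (n : ℕ) (m : Fin n → ℕ+) : Subring ℚ :=
  Subring.closure (Set.range fun i : Fin n => (((m i : ℕ) : ℚ))⁻¹)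

/-- The scalar `∏ i, mᵢ^{kᵢ}` by which `k ∈ ℤⁿ` acts on `ℤ[m₁^{±1}, …, mₙ^{±1}]`. -/
def gbsScale (n : ℕ) (m : Fin n → ℕ+) (k : Fin n → ℤ) : ℚ :=
  ∏ i : Fin n, ((m i : ℕ) : ℚ) ^ (k i)

lemma gbsScale_mem (n : ℕ) (m : Fin n → ℕ+) (k : Fin n → ℤ) :
    gbsScale n m k ∈ gbsRing n m := by
  refine Subring.prod_mem _ fun i _ => ?_
  rcases le_or_gt 0 (k i) with h | h
  · rw [← Int.toNat_of_nonneg h, zpow_natCast]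
    exact pow_mem (natCast_mem _ (m i : ℕ)) _
  · have hk : k i = -(((-k i).toNat : ℕ) : ℤ) := by omega
    have hne : ((m i : ℕ) : ℚ) ≠ 0 := by
      exact_mod_cast Nat.cast_ne_zero.mpr (m i).ne_zero
    rw [hk, zpow_neg, zpow_natCast, ← inv_pow]
    exact pow_mem (Subring.subset_closure (Set.mem_range_self i)) _

lemma gbsScale_zero (n : ℕ) (m : Fin n → ℕ+) : gbsScale n m 0 = 1 := by
  simp [gbsScale]

lemma gbsScale_add (n : ℕ) (m : Fin n → ℕ+) (k l : Fin n → ℤ) :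
    gbsScale n m (k + l) = gbsScale n m k * gbsScale n m l := by
  rw [gbsScale, gbsScale, gbsScale, ← Finset.prod_mul_distrib]
  refine Finset.prod_congr rfl fun i _ => ?_
  have hne : ((m i : ℕ) : ℚ) ≠ 0 := by
    exact_mod_cast Nat.cast_ne_zero.mpr (m i).ne_zero
  exact zpow_add₀ hne _ _

/-- The action of `k ∈ ℤⁿ` on `ℤ[m₁^{±1}, …, mₙ^{±1}]` by multiplication
by `∏ i, mᵢ^{kᵢ}`. -/
def gbsAct (n : ℕ) (m : Fin n → ℕ+) (k : Fin n → ℤ) (y : gbsRing n m) : gbsRing n m :=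
  ⟨gbsScale n m k * (y : ℚ), Subring.mul_mem _ (gbsScale_mem n m k) y.2⟩

/-- The semidirect product `N ⋊ M` with `N = ℤ[m₁^{±1}, …, mₙ^{±1}]` (additive)
and `M = ℤⁿ`, where `k ∈ M` acts on `N` by multiplication by `∏ i, mᵢ^{kᵢ}`:
multiplication is `⟨x, k⟩ * ⟨y, l⟩ = ⟨x + (∏ i, mᵢ^{kᵢ}) * y, k + l⟩`. -/
@[ext]
structure GBSProduct (n : ℕ) (m : Fin n → ℕ+) where
  fst : gbsRing n m
  snd : Fin n → ℤ

namespace GBSProduct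

variable {n : ℕ} {m : Fin n → ℕ+}

instance : Mul (GBSProduct n m) :=
  ⟨fun x y => ⟨x.fst + gbsAct n m x.snd y.fst, x.snd + y.snd⟩⟩

instance : One (GBSProduct n m) := ⟨⟨0, 0⟩⟩

instance : Inv (GBSProduct n m) :=
  ⟨fun x => ⟨-(gbsAct n m (-x.snd) x.fst), -x.snd⟩⟩

@[simp] lemma mul_fst (x y : GBSProduct n m) :
    ((x * y).fst : ℚ) = (x.fst : ℚ) + gbsScale n m x.snd * (y.fst : ℚ) := rfl

@[simp] lemma mul_snd (x y : GBSProduct n m) : (x * y).snd = x.snd + y.snd := rfl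

@[simp] lemma one_fst : ((1 : GBSProduct n m).fst : ℚ) = 0 := rfl

@[simp] lemma one_snd : (1 : GBSProduct n m).snd = 0 := rfl

@[simp] lemma inv_fst (x : GBSProduct n m) :
    ((x⁻¹).fst : ℚ) = -(gbsScale n m (-x.snd) * (x.fst : ℚ)) := rfl

@[simp] lemma inv_snd (x : GBSProduct n m) : (x⁻¹).snd = -x.snd := rfl

instance : Group (GBSProduct n m) where
  mul_assoc x y z := by
    refine GBSProduct.ext (Subtype.ext ?_) ?_
    · simp only [mul_fst, mul_snd, gbsScale_add]; ring
    · simp [add_assoc]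
  one_mul x := by
    refine GBSProduct.ext (Subtype.ext ?_) ?_ <;> simp [gbsScale_zero]
  mul_one x := by
    refine GBSProduct.ext (Subtype.ext ?_) ?_ <;> simp
  inv_mul_cancel x := by
    refine GBSProduct.ext (Subtype.ext ?_) ?_
    · simp only [mul_fst, inv_fst, inv_snd, one_fst, ← gbsScale_add, neg_add_cancel,
        gbsScale_zero]
    · simp

end GBSProduct

section GBSAux

open Multiplicative

variable {n : ℕ}

/-- generator `qᵢ` in the presented group -/
def qg (m : Fin n → ℕ+) (i : Fin n) : PresentedGroup (gbsRels n m) :=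
  PresentedGroup.of (Sum.inl i)

/-- generator `b` in the presented group -/
def bg (m : Fin n → ℕ+) : PresentedGroup (gbsRels n m) :=
  PresentedGroup.of (Sum.inr ())

variable {m : Fin n → ℕ+}

lemma grel {r : FreeGroup (Fin n ⊕ Unit)} (hr : r ∈ gbsRels n m) :
    PresentedGroup.mk (gbsRels n m) r = 1 :=
  (QuotientGroup.eq_one_iff r).mpr (Subgroup.subset_normalClosure hr)

lemma qg_comm (i j : Fin n) : Commute (qg m i) (qg m j) := by
  have h : qg m i * qg m j * (qg m i)⁻¹ * (qg m j)⁻¹ = 1 := by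
    have h := grel (Or.inl ⟨i, j, rfl⟩ : _ ∈ gbsRels n m)
    rw [map_mul, map_mul, map_inv, map_inv] at h
    exact h
  rw [mul_inv_eq_one] at h
  exact mul_inv_eq_iff_eq_mul.mp h

lemma qg_conj (i : Fin n) :
    (qg m i)⁻¹ * bg m * qg m i = bg m ^ (((m i : ℕ) : ℤ)) := by
  have h : (qg m i)⁻¹ * bg m * qg m i * bg m ^ (-((m i : ℕ) : ℤ)) = 1 := by
    have h := grel (Or.inr ⟨i, rfl⟩ : _ ∈ gbsRels n m)
    rw [map_mul, map_mul, map_mul, map_inv, map_zpow] at h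
    exact h
  rwa [zpow_neg, mul_inv_eq_one] at h

lemma qg_conj_zpow (i : Fin n) (a : ℤ) :
    (qg m i)⁻¹ * bg m ^ a * qg m i = bg m ^ (a * ((m i : ℕ) : ℤ)) :=
  calc (qg m i)⁻¹ * bg m ^ a * qg m i
      = ((qg m i)⁻¹ * bg m * ((qg m i)⁻¹)⁻¹) ^ a := by rw [conj_zpow, inv_inv]
    _ = (bg m ^ ((m i : ℕ) : ℤ)) ^ a := by rw [inv_inv, qg_conj]
    _ = bg m ^ (a * ((m i : ℕ) : ℤ)) := by rw [← zpow_mul, mul_comm]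


/-- the homomorphism `ℤⁿ → G`, `k ↦ ∏ qᵢ^{kᵢ}` -/
def wg (m : Fin n → ℕ+) : (Fin n → Multiplicative ℤ) →* PresentedGroup (gbsRels n m) :=
  MonoidHom.noncommPiCoprod (fun i => zpowersHom _ (qg m i))
    (show Pairwise fun i j => ∀ x y : Multiplicative ℤ, Commute (zpowersHom _ (qg m i) x) (zpowersHom _ (qg m j) y) from
      fun i j _ x y => (qg_comm i j).zpow_zpow _ _)

def cstz (n : ℕ) (t : ℤ) : Fin n → Multiplicative ℤ := fun _ => Multiplicative.ofAdd t

lemma cstz_add (t u : ℤ) : cstz n (t + u) = cstz n t * cstz n u := rfl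
lemma cstz_neg (t : ℤ) : cstz n (-t) = (cstz n t)⁻¹ := rfl
lemma cstz_zero : cstz n 0 = 1 := rfl

def Mint (m : Fin n → ℕ+) : ℤ := ∏ i, ((m i : ℕ) : ℤ)

lemma us_conj (s : Finset (Fin n)) : ∀ a : ℤ,
    (s.noncommProd (qg m) (fun i _ j _ _ => qg_comm i j))⁻¹ * bg m ^ a *
      s.noncommProd (qg m) (fun i _ j _ _ => qg_comm i j)
    = bg m ^ (a * ∏ i ∈ s, ((m i : ℕ) : ℤ)) := by
  induction s using Finset.induction_on with
  | empty => intro a; show (1 : PresentedGroup (gbsRels n m))⁻¹ * bg m ^ a * 1 = _; simp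
  | insert x s hx ih =>
    intro a
    rw [Finset.noncommProd_insert_of_notMem s x (qg m) (fun i _ j _ _ => qg_comm i j) hx, Finset.prod_insert hx]
    calc (qg m x * s.noncommProd (qg m) _)⁻¹ * bg m ^ a *
            (qg m x * s.noncommProd (qg m) (fun i _ j _ _ => qg_comm i j))
        = (s.noncommProd (qg m) (fun i _ j _ _ => qg_comm i j))⁻¹ *
            ((qg m x)⁻¹ * bg m ^ a * qg m x) *
            s.noncommProd (qg m) (fun i _ j _ _ => qg_comm i j) := by group
      _ = (s.noncommProd (qg m) (fun i _ j _ _ => qg_comm i j))⁻¹ *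
            bg m ^ (a * ((m x : ℕ) : ℤ)) *
            s.noncommProd (qg m) (fun i _ j _ _ => qg_comm i j) := by rw [qg_conj_zpow]
      _ = bg m ^ (a * ((m x : ℕ) : ℤ) * ∏ i ∈ s, ((m i : ℕ) : ℤ)) := ih _
      _ = bg m ^ (a * (((m x : ℕ) : ℤ) * ∏ i ∈ s, ((m i : ℕ) : ℤ))) := by rw [mul_assoc]

lemma wg_cst_one : wg m (cstz n 1) = Finset.univ.noncommProd (qg m) (fun i _ j _ _ => qg_comm i j) := by
  unfold wg
  rw [MonoidHom.noncommPiCoprod_apply]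
  exact Finset.noncommProd_congr rfl (fun i _ => zpow_one (qg m i)) _

lemma w1_conj (a : ℤ) :
    (wg m (cstz n 1))⁻¹ * bg m ^ a * wg m (cstz n 1) = bg m ^ (a * Mint m) := by
  rw [wg_cst_one]; exact us_conj Finset.univ a

lemma wt_conj (t : ℕ) : ∀ a : ℤ,
    (wg m (cstz n t))⁻¹ * bg m ^ a * wg m (cstz n t) = bg m ^ (a * Mint m ^ t) := by
  induction t with
  | zero => intro a; rw [Nat.cast_zero, cstz_zero, map_one]; simp
  | succ t ih =>
    intro a
    rw [show ((t + 1 : ℕ) : ℤ) = (t : ℤ) + 1 by push_cast; ring, cstz_add, map_mul]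
    calc (wg m (cstz n t) * wg m (cstz n 1))⁻¹ * bg m ^ a *
            (wg m (cstz n t) * wg m (cstz n 1))
        = (wg m (cstz n 1))⁻¹ * ((wg m (cstz n t))⁻¹ * bg m ^ a * wg m (cstz n t)) *
            wg m (cstz n 1) := by group
      _ = (wg m (cstz n 1))⁻¹ * bg m ^ (a * Mint m ^ t) * wg m (cstz n 1) := by rw [ih]
      _ = bg m ^ (a * Mint m ^ t * Mint m) := w1_conj _
      _ = bg m ^ (a * Mint m ^ (t + 1)) := by rw [pow_succ, mul_assoc]

/-- the element `Q^t b^a Q^{-t}` -/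
def pg (m : Fin n → ℕ+) (t : ℕ) (a : ℤ) : PresentedGroup (gbsRels n m) :=
  wg m (cstz n t) * bg m ^ a * (wg m (cstz n t))⁻¹

lemma pg_zero (t : ℕ) : pg m t 0 = 1 := by simp [pg]

lemma pg_t0 (a : ℤ) : pg m 0 a = bg m ^ a := by
  rw [pg, Nat.cast_zero, cstz_zero, map_one]; group

lemma pg_mul_same (t : ℕ) (a c : ℤ) : pg m t a * pg m t c = pg m t (a + c) := by
  rw [pg, pg, pg, zpow_add]; group

lemma pg_inv (t : ℕ) (a : ℤ) : (pg m t a)⁻¹ = pg m t (-a) := by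
  rw [pg, pg, zpow_neg]; group

lemma pg_shift (t u : ℕ) (a : ℤ) : pg m t a = pg m (t + u) (a * Mint m ^ u) := by
  have h := wt_conj (m := m) u a
  rw [pg, pg, show ((t + u : ℕ) : ℤ) = (t : ℤ) + u by push_cast; ring, cstz_add, map_mul, ← h]
  group

lemma pg_mul (t s : ℕ) (a c : ℤ) :
    pg m t a * pg m s c = pg m (t + s) (a * Mint m ^ s + c * Mint m ^ t) := by
  rw [pg_shift t s a, pg_shift s t c, add_comm s t, pg_mul_same]


lemma comm_q_w (i : Fin n) (k : Fin n → Multiplicative ℤ) : Commute (qg m i) (wg m k) := by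
  unfold wg
  exact MonoidHom.commute_noncommPiCoprod _ (fun j x => (qg_comm i j).zpow_right _) k

lemma conj_qinv (i : Fin n) (t : ℕ) (a : ℤ) :
    (qg m i)⁻¹ * pg m t a * qg m i = pg m t (a * ((m i : ℕ) : ℤ)) := by
  have h1 : (qg m i)⁻¹ * wg m (cstz n t) = wg m (cstz n t) * (qg m i)⁻¹ :=
    ((comm_q_w i (cstz n t)).inv_left).eq
  have h2 : (wg m (cstz n t))⁻¹ * qg m i = qg m i * (wg m (cstz n t))⁻¹ :=
    ((comm_q_w i (cstz n t)).symm.inv_left).eq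
  rw [pg, pg, ← qg_conj_zpow]
  calc (qg m i)⁻¹ * (wg m (cstz n t) * bg m ^ a * (wg m (cstz n t))⁻¹) * qg m i
      = ((qg m i)⁻¹ * wg m (cstz n t)) * bg m ^ a * ((wg m (cstz n t))⁻¹ * qg m i) := by
        group
    _ = (wg m (cstz n t) * (qg m i)⁻¹) * bg m ^ a * (qg m i * (wg m (cstz n t))⁻¹) := by
        rw [h1, h2]
    _ = wg m (cstz n t) * ((qg m i)⁻¹ * bg m ^ a * qg m i) * (wg m (cstz n t))⁻¹ := by
        group

/-- `∏_{j ≠ i} mⱼ` -/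
def Md (m : Fin n → ℕ+) (i : Fin n) : ℤ := ∏ j ∈ Finset.univ.erase i, ((m j : ℕ) : ℤ)

lemma Md_mul (i : Fin n) : Md m i * ((m i : ℕ) : ℤ) = Mint m :=
  Finset.prod_erase_mul _ _ (Finset.mem_univ i)

lemma conj_q (i : Fin n) (t : ℕ) (a : ℤ) :
    qg m i * pg m t a * (qg m i)⁻¹ = pg m (t + 1) (a * Md m i) := by
  have key : (qg m i)⁻¹ * pg m (t + 1) (a * Md m i) * qg m i = pg m t a := by
    rw [conj_qinv, mul_assoc, Md_mul]
    rw [pg_shift t 1 a, pow_one]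
  rw [← key]; group

/-- subgroup of elements conjugating the `pg`-set into itself, in both directions -/
def conjStab (m : Fin n → ℕ+) : Subgroup (PresentedGroup (gbsRels n m)) where
  carrier := {g | ∀ t a, (∃ s c, g * pg m t a * g⁻¹ = pg m s c) ∧
      (∃ s c, g⁻¹ * pg m t a * g = pg m s c)}
  one_mem' := fun t a => ⟨⟨t, a, by simp⟩, ⟨t, a, by simp⟩⟩
  mul_mem' := by
    intro x y hx hy t a
    constructor
    · obtain ⟨s, c, h1⟩ := (hy t a).1
      obtain ⟨s', c', h2⟩ := (hx s c).1
      exact ⟨s', c', by rw [← h2, ← h1]; group⟩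
    · obtain ⟨s, c, h1⟩ := (hx t a).2
      obtain ⟨s', c', h2⟩ := (hy s c).2
      exact ⟨s', c', by rw [← h2, ← h1]; group⟩
  inv_mem' := by
    intro x hx t a
    refine ⟨?_, ?_⟩
    · obtain ⟨s, c, h⟩ := (hx t a).2
      exact ⟨s, c, by rw [← h]; group⟩
    · obtain ⟨s, c, h⟩ := (hx t a).1
      exact ⟨s, c, by rw [← h]; group⟩

lemma mem_conjStab {g : PresentedGroup (gbsRels n m)} :
    g ∈ conjStab m ↔ ∀ t a, (∃ s c, g * pg m t a * g⁻¹ = pg m s c) ∧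
      (∃ s c, g⁻¹ * pg m t a * g = pg m s c) := Iff.rfl

lemma qg_mem_conjStab (i : Fin n) : qg m i ∈ conjStab m :=
  mem_conjStab.mpr fun t a =>
    ⟨⟨t + 1, a * Md m i, conj_q i t a⟩, ⟨t, a * ((m i : ℕ) : ℤ), conj_qinv i t a⟩⟩

lemma wg_mem_conjStab (k : Fin n → Multiplicative ℤ) : wg m k ∈ conjStab m := by
  have h1 : wg m k ∈ Subgroup.closure (Set.range (qg m)) := by
    unfold wg
    rw [MonoidHom.noncommPiCoprod_apply]
    apply Subgroup.noncommProd_mem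
    intro i _
    exact Subgroup.zpow_mem _ (Subgroup.subset_closure (Set.mem_range_self i)) _
  exact (Subgroup.closure_le (conjStab m)).mpr
    (by rintro _ ⟨i, rfl⟩; exact qg_mem_conjStab i) h1

/-- the subgroup of elements of the form `pg t a * wg k` -/
def bigS (m : Fin n → ℕ+) : Subgroup (PresentedGroup (gbsRels n m)) where
  carrier := {g | ∃ t a k, g = pg m t a * wg m k}
  one_mem' := ⟨0, 0, 1, by rw [pg_zero, map_one, one_mul]⟩
  mul_mem' := by
    rintro x y ⟨t, a, k, rfl⟩ ⟨s, c, l, rfl⟩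
    obtain ⟨s₁, c₁, h₁⟩ := (mem_conjStab.mp (wg_mem_conjStab (m := m) k) s c).1
    refine ⟨t + s₁, a * Mint m ^ s₁ + c₁ * Mint m ^ t, k * l, ?_⟩
    rw [map_mul, ← pg_mul, ← h₁]
    group
  inv_mem' := by
    rintro x ⟨t, a, k, rfl⟩
    obtain ⟨s₁, c₁, h₁⟩ := (mem_conjStab.mp (wg_mem_conjStab (m := m) k) t (-a)).2
    refine ⟨s₁, c₁, k⁻¹, ?_⟩
    rw [map_inv, ← h₁, ← pg_inv]
    group

lemma mem_bigS (g : PresentedGroup (gbsRels n m)) : ∃ t a k, g = pg m t a * wg m k := by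
  refine PresentedGroup.generated_by _ (bigS m) ?_ g
  rintro (i | ⟨⟩)
  · refine ⟨0, 0, Pi.mulSingle i (Multiplicative.ofAdd 1), ?_⟩
    rw [pg_zero, one_mul]
    show qg m i = wg m (Pi.mulSingle i (Multiplicative.ofAdd 1))
    unfold wg
    rw [MonoidHom.noncommPiCoprod_mulSingle]
    exact (zpow_one _).symm
  · exact ⟨0, 1, 1, by rw [map_one, mul_one, pg_t0, zpow_one]; rfl⟩


/-! ### The semidirect product side -/

lemma gbsScale_ne_zero (k : Fin n → ℤ) : gbsScale n m k ≠ 0 := by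
  refine Finset.prod_ne_zero_iff.mpr fun i _ => ?_
  exact zpow_ne_zero _ (by exact_mod_cast (Nat.cast_ne_zero.mpr (m i).ne_zero))

lemma gbsScale_single (i : Fin n) : gbsScale n m (Pi.single i 1) = ((m i : ℕ) : ℚ) := by
  rw [gbsScale, Finset.prod_eq_single i
    (fun j _ hj => by rw [Pi.single_eq_of_ne hj, zpow_zero])
    (fun h => absurd (Finset.mem_univ i) h)]
  rw [Pi.single_eq_same, zpow_one]

lemma gbsScale_cst (t : ℤ) :
    gbsScale n m (fun _ => t) = (∏ i, ((m i : ℕ) : ℚ)) ^ t := by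
  rw [gbsScale, Finset.prod_zpow]

/-- the homomorphism `ℤⁿ → N ⋊ ℤⁿ` -/
def muH (m : Fin n → ℕ+) : Multiplicative (Fin n → ℤ) →* GBSProduct n m where
  toFun k := ⟨0, Multiplicative.toAdd k⟩
  map_one' := rfl
  map_mul' x y := by
    refine (GBSProduct.ext (Subtype.ext ?_) ?_).symm
    · simp [GBSProduct.mul_fst]
    · rfl

/-- the homomorphism `N → N ⋊ ℤⁿ` -/
def nuH (m : Fin n → ℕ+) : Multiplicative (gbsRing n m) →* GBSProduct n m where
  toFun x := ⟨Multiplicative.toAdd x, 0⟩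
  map_one' := rfl
  map_mul' x y := by
    refine (GBSProduct.ext (Subtype.ext ?_) ?_).symm
    · simp [GBSProduct.mul_fst, gbsScale_zero]
    · simp [GBSProduct.mul_snd]

/-- the map sending the generators of the presented group into the semidirect product -/
def fmap (m : Fin n → ℕ+) : (Fin n ⊕ Unit) → GBSProduct n m :=
  Sum.elim (fun i => muH m (Multiplicative.ofAdd (-Pi.single i 1))) (fun _ => nuH m (Multiplicative.ofAdd 1))

lemma fmap_inl (i : Fin n) :
    fmap m (Sum.inl i) = muH m (Multiplicative.ofAdd (-Pi.single i 1)) := rfl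

lemma fmap_inr (u : Unit) : fmap m (Sum.inr u) = nuH m (Multiplicative.ofAdd 1) := rfl

lemma frel : ∀ r ∈ gbsRels n m, FreeGroup.lift (fmap m) r = 1 := by
  rintro r (⟨i, j, rfl⟩ | ⟨i, rfl⟩)
  · simp only [map_mul, map_inv, FreeGroup.lift_apply_of, fmap_inl]
    refine GBSProduct.ext (Subtype.ext ?_) ?_
    · simp [GBSProduct.mul_fst, GBSProduct.inv_fst, muH]
    · simp only [GBSProduct.mul_snd, GBSProduct.inv_snd, muH, MonoidHom.coe_mk,
        OneHom.coe_mk, toAdd_ofAdd, GBSProduct.one_snd]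
      abel
  · simp only [map_mul, map_inv, map_zpow, FreeGroup.lift_apply_of, fmap_inl, fmap_inr]
    rw [← map_zpow (nuH m), ← ofAdd_zsmul]
    refine GBSProduct.ext (Subtype.ext ?_) ?_
    · simp only [GBSProduct.mul_fst, GBSProduct.inv_fst, GBSProduct.mul_snd,
        GBSProduct.inv_snd, muH, nuH, MonoidHom.coe_mk, OneHom.coe_mk, toAdd_ofAdd,
        ZeroMemClass.coe_zero, mul_zero, add_zero, zero_add, neg_zero, neg_neg,
        gbsScale_single, GBSProduct.one_fst]
      rw [show Pi.single i 1 + -Pi.single i 1 = (0 : Fin n → ℤ) from add_neg_cancel _,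
        gbsScale_zero, one_mul, zsmul_eq_mul]
      push_cast
      ring
    · simp only [GBSProduct.mul_snd, GBSProduct.inv_snd, muH, nuH, MonoidHom.coe_mk,
        OneHom.coe_mk, toAdd_ofAdd, GBSProduct.one_snd]
      abel

/-- the homomorphism from the presented group to the semidirect product -/
def phiH (m : Fin n → ℕ+) : PresentedGroup (gbsRels n m) →* GBSProduct n m :=
  PresentedGroup.toGroup frel

lemma phi_q (i : Fin n) : phiH m (qg m i) = muH m (Multiplicative.ofAdd (-Pi.single i 1)) :=
  PresentedGroup.toGroup.of frel

lemma phi_b : phiH m (bg m) = nuH m (Multiplicative.ofAdd 1) :=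
  PresentedGroup.toGroup.of frel


lemma phi_w (k : Fin n → Multiplicative ℤ) :
    phiH m (wg m k) = muH m (Multiplicative.ofAdd (fun i => -(Multiplicative.toAdd (k i)))) := by
  have step : ∀ i : Fin n, phiH m (zpowersHom _ (qg m i) (k i))
      = muH m (Multiplicative.ofAdd (Pi.single i (-(Multiplicative.toAdd (k i))))) := by
    intro i
    rw [zpowersHom_apply, map_zpow, phi_q]
    have key : (Multiplicative.ofAdd ((-Pi.single i (1 : ℤ) : Fin n → ℤ))) ^ Multiplicative.toAdd (k i)
        = Multiplicative.ofAdd (Pi.single i (-(Multiplicative.toAdd (k i)))) := by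
      rw [← ofAdd_zsmul]
      refine congrArg Multiplicative.ofAdd ?_
      funext j
      by_cases hj : j = i
      · subst hj; simp
      · simp [Pi.single_eq_of_ne hj]
    rw [← map_zpow, key]
  unfold wg
  rw [MonoidHom.noncommPiCoprod_apply, Finset.map_noncommProd,
      Finset.noncommProd_congr rfl (fun i _ => step i)
        (fun x _ y _ _ => Commute.map ((qg_comm x y).zpow_zpow _ _) (phiH m)),
      ← Finset.map_noncommProd _ _ (fun x _ y _ _ => Commute.all _ _) (muH m),
      Finset.noncommProd_eq_prod, ← ofAdd_sum]
  congr 1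
  rw [Finset.univ_sum_single (fun i => -(Multiplicative.toAdd (k i)))]

lemma phi_w_cst (t : ℤ) :
    phiH m (wg m (cstz n t)) = muH m (Multiplicative.ofAdd fun _ : Fin n => -t) :=
  phi_w _

lemma phi_pg_fst (t : ℕ) (a : ℤ) :
    ((phiH m (pg m t a)).fst : ℚ) = gbsScale n m (fun _ => -(t : ℤ)) * a := by
  rw [pg, map_mul, map_mul, map_inv, map_zpow, phi_b, phi_w_cst, ← map_zpow, ← ofAdd_zsmul]
  simp only [GBSProduct.mul_fst, GBSProduct.inv_fst, GBSProduct.mul_snd, GBSProduct.inv_snd,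
    muH, nuH, MonoidHom.coe_mk, OneHom.coe_mk, toAdd_ofAdd, ZeroMemClass.coe_zero,
    mul_zero, add_zero, zero_add, neg_zero, neg_neg, zsmul_eq_mul]
  push_cast
  ring

lemma phi_pg_snd (t : ℕ) (a : ℤ) : (phiH m (pg m t a)).snd = 0 := by
  rw [pg, map_mul, map_mul, map_inv, map_zpow, phi_b, phi_w_cst, ← map_zpow, ← ofAdd_zsmul]
  simp only [GBSProduct.mul_snd, GBSProduct.inv_snd, muH, nuH, MonoidHom.coe_mk,
    OneHom.coe_mk, toAdd_ofAdd]
  abel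

lemma Mint_cast : ((Mint m : ℤ) : ℚ) = ∏ i, ((m i : ℕ) : ℚ) := by
  rw [Mint]; push_cast; rfl

lemma ring_rep {x : ℚ} (hx : x ∈ gbsRing n m) :
    ∃ (a : ℤ) (t : ℕ), x = (a : ℚ) / (∏ i, ((m i : ℕ) : ℚ)) ^ t := by
  have hP0 : (∏ i, ((m i : ℕ) : ℚ)) ≠ 0 :=
    Finset.prod_ne_zero_iff.mpr fun i _ => by exact_mod_cast (m i).ne_zero
  induction hx using Subring.closure_induction with
  | mem x h =>
    obtain ⟨i, rfl⟩ := h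
    refine ⟨Md m i, 1, ?_⟩
    have hMd : ((Md m i : ℤ) : ℚ) * ((m i : ℕ) : ℚ) = ∏ j, ((m j : ℕ) : ℚ) := by
      rw [Md]; push_cast
      exact Finset.prod_erase_mul _ _ (Finset.mem_univ i)
    have hm0 : ((m i : ℕ) : ℚ) ≠ 0 := by exact_mod_cast (m i).ne_zero
    rw [pow_one, eq_div_iff hP0, ← hMd]
    field_simp
  | zero => exact ⟨0, 0, by simp⟩
  | one => exact ⟨1, 0, by simp⟩
  | add x y hx hy ihx ihy =>
    obtain ⟨a, t, rfl⟩ := ihx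
    obtain ⟨c, s, rfl⟩ := ihy
    refine ⟨a * Mint m ^ s + c * Mint m ^ t, t + s, ?_⟩
    have h1 : (∏ i, ((m i : ℕ) : ℚ)) ^ t ≠ 0 := pow_ne_zero _ hP0
    have h2 : (∏ i, ((m i : ℕ) : ℚ)) ^ s ≠ 0 := pow_ne_zero _ hP0
    push_cast [Mint_cast]
    rw [div_add_div _ _ h1 h2, pow_add]
    congr 1
    ring
  | neg x hx ihx =>
    obtain ⟨a, t, rfl⟩ := ihx
    exact ⟨-a, t, by push_cast; ring⟩
  | mul x y hx hy ihx ihy =>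
    obtain ⟨a, t, rfl⟩ := ihx
    obtain ⟨c, s, rfl⟩ := ihy
    refine ⟨a * c, t + s, ?_⟩
    push_cast
    rw [div_mul_div_comm, ← pow_add]

lemma phi_bijective : Function.Bijective (phiH m) := by
  constructor
  · rw [injective_iff_map_eq_one]
    intro g hg
    obtain ⟨t, a, k, rfl⟩ := mem_bigS g
    rw [map_mul, phi_w] at hg
    have h1 : ((phiH m (pg m t a) *
        muH m (Multiplicative.ofAdd fun i => -(Multiplicative.toAdd (k i)))).fst : ℚ) = 0 := by
      rw [hg]; rfl
    have h2 : (phiH m (pg m t a) *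
        muH m (Multiplicative.ofAdd fun i => -(Multiplicative.toAdd (k i)))).snd = 0 := by
      rw [hg]; rfl
    rw [GBSProduct.mul_fst, phi_pg_fst] at h1
    have hfst : ((muH m (Multiplicative.ofAdd fun i =>
        -(Multiplicative.toAdd (k i)))).fst : ℚ) = 0 := rfl
    rw [hfst, mul_zero, add_zero] at h1
    rw [GBSProduct.mul_snd, phi_pg_snd, zero_add] at h2
    have hsnd : (muH m (Multiplicative.ofAdd fun i => -(Multiplicative.toAdd (k i)))).snd
        = fun i => -(Multiplicative.toAdd (k i)) := rfl
    rw [hsnd] at h2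
    have ha : a = 0 := by
      rcases mul_eq_zero.mp h1 with h | h
      · exact absurd h (gbsScale_ne_zero _)
      · exact_mod_cast h
    have hk : k = 1 := by
      funext i
      have := congrFun h2 i
      simp only [Pi.zero_apply, neg_eq_zero] at this
      exact Multiplicative.toAdd.injective (by simpa using this)
    rw [ha, hk, pg_zero, map_one, one_mul]
  · intro x
    obtain ⟨a, t, hx⟩ := ring_rep x.fst.2
    refine ⟨pg m t a * wg m (fun i => Multiplicative.ofAdd (-(x.snd i))), ?_⟩
    rw [map_mul, phi_w]
    refine GBSProduct.ext (Subtype.ext ?_) ?_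
    · rw [GBSProduct.mul_fst, phi_pg_fst, phi_pg_snd]
      show gbsScale n m (fun _ => -(t : ℤ)) * (a : ℚ) +
        gbsScale n m 0 * ((0 : gbsRing n m) : ℚ) = (x.fst : ℚ)
      rw [hx, gbsScale_cst, ZeroMemClass.coe_zero, mul_zero, add_zero, zpow_neg,
        zpow_natCast, div_eq_mul_inv, mul_comm]
    · rw [GBSProduct.mul_snd, phi_pg_snd, zero_add]
      show (fun i => -(Multiplicative.toAdd (Multiplicative.ofAdd (-(x.snd i))))) = x.snd
      funext i
      show -(-(x.snd i)) = x.snd i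
      exact neg_neg _

end GBSAux

/-- The generalized metabelian Baumslag–Solitar group `⟨q₁, …, qₙ, b ∣ [qᵢ, qⱼ] = 1,
qᵢ⁻¹ b qᵢ = b^{mᵢ}⟩` (with `n ≥ 1` and the `mᵢ` positive integers) is isomorphic to the
semidirect product `N ⋊ M`, where `N = ℤ[m₁^{±1}, …, mₙ^{±1}] ≤ ℚ` (as additive
groups), `M = ℤⁿ`, and `k ∈ M` acts on `N` by multiplication by `∏ i, mᵢ^{kᵢ}`. -/
theorem generalizedBS_iso_semidirectProduct (n : ℕ) (hn : 1 ≤ n) (m : Fin n → ℕ+) :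
    Nonempty (PresentedGroup (gbsRels n m) ≃* GBSProduct n m) := by
  exact ⟨MulEquiv.ofBijective (phiH m) phi_bijective⟩
end
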